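/- Let k be a field, let A and B be finitely generated k-algebras, let φ₁, φ₂ : A → B be k-algebra homomorphisms, let J ⊆ B be the ideal generated by all elements φ₁(a) − φ₂(a) for a ∈ A, and let Fix := V(J) ⊆ Spec B. Assume: (i) every fiber of the map Spec B → Spec A, p ↦ φ₂⁻¹(p), is a finite set; (ii) for every maximal ideal m ⊆ A and every p ∈ Fix there exist g ∈ B \ p and n ≥ 1 such that in the localization B_g one has B_g·φ₁(m) ⊆ B_g·φ₂(m) and (B_g·φ₁(m))ⁿ ⊆ (B_g·φ₂(m))ⁿ⁺¹ (i.e. the correspondence is contracting near every closed point of Spec A in a neighborhood of its fixed points). Then Fix is a finite set. -/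

import Mathlib

/-!
Let `p` be a fixed point and `q ⊇ p` a maximal ideal of `B`. Then `q` is a fixed point too, and
`m = φ₂⁻¹(q)` is maximal by Zariski's lemma. Modulo `p` the maps `φ₁` and `φ₂` agree, so in the
Noetherian domain `B_g / p B_g` the image `K` of `m` is a proper ideal with `Kⁿ ⊆ Kⁿ⁺¹`; Krull's
intersection theorem forces `K = 0`, i.e. `φ₂⁻¹(p) = m`. The closure of `p` therefore lies in the
finite fibre over the closed point `m`, and in the Jacobson space `Spec B` a point with finite
closure is closed. So every point of `V(J)` is maximal, hence a minimal prime over `J`, and a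
Noetherian ring has only finitely many of those.
-/

open PrimeSpectrum

theorem Ideal.IsMaximal.comap_algHom {k A B : Type*} [Field k] [CommRing A] [CommRing B]
    [Algebra k A] [Algebra k B] [Algebra.FiniteType k B] (φ : A →ₐ[k] B)
    {m : Ideal B} (hm : m.IsMaximal) : (m.comap (φ : A →+* B)).IsMaximal := by
  let := Ideal.Quotient.field m
  have : Module.Finite k (B ⧸ m) := finite_of_finite_type_of_isJacobsonRing k (B ⧸ m)
  let ψ := (Ideal.Quotient.mkₐ k m).comp φ
  have hψ : (ψ : A →+* B ⧸ m).IsIntegral := by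
    refine RingHom.IsIntegral.tower_top (algebraMap k A) _ ?_
    rw [ψ.comp_algebraMap]
    exact Algebra.IsIntegral.isIntegral
  have hker : RingHom.ker (ψ : A →+* B ⧸ m) = m.comap (φ : A →+* B) := by
    ext a
    simp [ψ, Ideal.Quotient.eq_zero_iff_mem]
  simpa [← RingHom.ker_eq_comap_bot, hker] using
    Ideal.isMaximal_comap_of_isIntegral_of_isMaximal' _ hψ ⊥

theorem Ideal.eq_bot_of_pow_le_pow_succ {R : Type*} [CommRing R] [IsNoetherianRing R]
    [IsDomain R] {I : Ideal R} (hI : I ≠ ⊤) {n : ℕ} (h : I ^ n ≤ I ^ (n + 1)) : I = ⊥ := by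
  have hstable : ∀ i, I ^ n ≤ I ^ (n + i) := by
    intro i
    induction i with
    | zero => rfl
    | succ i ih =>
      calc I ^ n ≤ I ^ (n + 1) := h
        _ = I * I ^ n := pow_succ' I n
        _ ≤ I * I ^ (n + i) := Ideal.mul_mono_right ih
        _ = I ^ (n + (i + 1)) := by rw [← pow_succ']; ring_nf
  have hbot : I ^ n ≤ ⨅ i : ℕ, I ^ i := le_iInf fun i =>
    (hstable i).trans (Ideal.pow_le_pow_right (Nat.le_add_left i n))
  rw [Ideal.iInf_pow_eq_bot_of_isDomain I hI, le_bot_iff] at hbot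
  rcases n with _ | n
  · simp at hbot
  · exact (Ideal.pow_eq_bot n.succ_ne_zero).mp hbot

theorem Ideal.le_comap_of_pow_map_le_pow_succ_map {A S : Type*} [CommRing A] [CommRing S]
    [IsNoetherianRing S] {P : Ideal S} [P.IsPrime] {f₁ f₂ : A →+* S}
    (hf : ∀ a, f₁ a - f₂ a ∈ P) {m : Ideal A} (hm : m.map f₂ ⊔ P ≠ ⊤) {n : ℕ}
    (h : (m.map f₁) ^ n ≤ (m.map f₂) ^ (n + 1)) : m ≤ P.comap f₂ := by
  let π := Ideal.Quotient.mk P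
  have hπ : π.comp f₁ = π.comp f₂ := RingHom.ext fun a => Ideal.Quotient.eq.mpr (hf a)
  have hK : ((m.map f₂).map π) ^ n ≤ ((m.map f₂).map π) ^ (n + 1) := by
    simpa only [Ideal.map_pow, Ideal.map_map, hπ] using Ideal.map_mono (f := π) h
  have hKtop : (m.map f₂).map π ≠ ⊤ := by
    rwa [← (Ideal.comap_injective_of_surjective π Ideal.Quotient.mk_surjective).ne_iff,
      Ideal.comap_map_of_surjective' π Ideal.Quotient.mk_surjective, Ideal.mk_ker, Ideal.comap_top]
  rw [← Ideal.map_le_iff_le_comap, ← Ideal.mk_ker (I := P), ← Ideal.map_eq_bot_iff_le_ker]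
  exact Ideal.eq_bot_of_pow_le_pow_succ hKtop hK

theorem Ideal.le_comap_of_pow_map_le_pow_succ_map_away {A B : Type*} [CommRing A] [CommRing B]
    [IsNoetherianRing B] {f₁ f₂ : A →+* B} {p q : Ideal B} [p.IsPrime] [q.IsPrime]
    (hpq : p ≤ q) (hf : ∀ a, f₁ a - f₂ a ∈ p) {m : Ideal A} (hm : m ≤ q.comap f₂)
    {g : B} (hg : g ∉ q) {n : ℕ}
    (h : (m.map ((algebraMap B (Localization.Away g)).comp f₁)) ^ n ≤
      (m.map ((algebraMap B (Localization.Away g)).comp f₂)) ^ (n + 1)) :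
    m ≤ p.comap f₂ := by
  let ι := algebraMap B (Localization.Away g)
  have hpg : Disjoint (Submonoid.powers g : Set B) p :=
    (Ideal.disjoint_powers_iff_notMem_of_isPrime g).mpr fun hgp => hg (hpq hgp)
  have hqg : Disjoint (Submonoid.powers g : Set B) q :=
    (Ideal.disjoint_powers_iff_notMem_of_isPrime g).mpr hg
  have := IsLocalization.isPrime_of_isPrime_disjoint _ (Localization.Away g) p ‹_› hpg
  have hqL := IsLocalization.isPrime_of_isPrime_disjoint _ (Localization.Away g) q ‹_› hqg
  have hsup : m.map (ι.comp f₂) ⊔ p.map ι ≤ q.map ι := by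
    refine sup_le ?_ (Ideal.map_mono hpq)
    rw [← Ideal.map_map]
    exact Ideal.map_mono (Ideal.map_le_iff_le_comap.mpr hm)
  have hmp := Ideal.le_comap_of_pow_map_le_pow_succ_map (P := p.map ι)
    (fun a => by
      rw [RingHom.comp_apply, RingHom.comp_apply, ← map_sub]
      exact Ideal.mem_map_of_mem ι (hf a))
    (ne_top_of_le_ne_top hqL.ne_top hsup) h
  rw [← Ideal.comap_comap] at hmp
  exact hmp.trans_eq
    (congrArg (Ideal.comap f₂) (IsLocalization.under_map_of_isPrime_disjoint _ _ ‹_› hpg))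

theorem isClosed_singleton_of_finite_closure {X : Type*} [TopologicalSpace X] [JacobsonSpace X]
    {x : X} (hx : (closure {x}).Finite) : IsClosed {x} := by
  set S := closure {x} ∩ closedPoints X
  have hS : IsClosed S := by
    rw [← S.biUnion_of_singleton]
    exact (hx.subset Set.inter_subset_left).isClosed_biUnion fun y hy => hy.2
  have hxS : closure {x} ⊆ S := by
    rw [← hS.closure_eq,
      JacobsonSpace.closure_inter_closedPoints_eq_closure isClosed_closure.isLocallyClosed,
      closure_closure]
  exact (hxS (subset_closure rfl)).2

theorem PrimeSpectrum.finite_zeroLocus_of_forall_isMaximal {R : Type*} [CommRing R]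
    [IsNoetherianRing R] (I : Ideal R)
    (h : ∀ p ∈ zeroLocus (I : Set R), p.asIdeal.IsMaximal) : (zeroLocus (I : Set R)).Finite := by
  refine ((I.finite_minimalPrimes_of_isNoetherianRing R).preimage
    fun _ _ _ _ => PrimeSpectrum.ext).subset fun p hp => ?_
  obtain ⟨q, hq, hqp⟩ := Ideal.exists_minimalPrimes_le (mem_zeroLocus _ _ |>.mp hp)
  have hqmax : q.IsMaximal := h ⟨q, hq.1.1⟩ hq.1.2
  rwa [Set.mem_preimage, ← hqmax.eq_of_le p.isPrime.ne_top hqp]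

theorem stmt11_general {k A B : Type*} [Field k] [CommRing A] [CommRing B]
    [Algebra k A] [Algebra k B]
    (hB : Algebra.FiniteType k B)
    (φ₁ φ₂ : A →ₐ[k] B)
    (J : Ideal B) (hJ : J = Ideal.span {b : B | ∃ a : A, b = φ₁ a - φ₂ a})
    (hqf : ∀ p : PrimeSpectrum A,
      (PrimeSpectrum.comap (φ₂ : A →+* B) ⁻¹' {p}).Finite)
    (hcontr : ∀ m : Ideal A, m.IsMaximal →
      ∀ p ∈ PrimeSpectrum.zeroLocus (J : Set B),
      ∃ g : B, g ∉ p.asIdeal ∧ ∃ n : ℕ, 1 ≤ n ∧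
        Ideal.map ((algebraMap B (Localization.Away g)).comp (φ₁ : A →+* B)) m ≤
          Ideal.map ((algebraMap B (Localization.Away g)).comp (φ₂ : A →+* B)) m ∧
        (Ideal.map ((algebraMap B (Localization.Away g)).comp (φ₁ : A →+* B)) m) ^ n ≤
          (Ideal.map ((algebraMap B (Localization.Away g)).comp (φ₂ : A →+* B)) m) ^ (n + 1)) :
    (PrimeSpectrum.zeroLocus (J : Set B)).Finite := by
  have : IsNoetherianRing B := Algebra.FiniteType.isNoetherianRing k B
  have : IsJacobsonRing B := isJacobsonRing_of_finiteType (A := k)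
  have hfix : ∀ p ∈ zeroLocus (J : Set B), ∀ a, φ₁ a - φ₂ a ∈ p.asIdeal := fun p hp a =>
    (mem_zeroLocus _ _).mp hp (hJ ▸ Ideal.subset_span ⟨a, rfl⟩)
  have hcomap : ∀ p ∈ zeroLocus (J : Set B), (p.asIdeal.comap (φ₂ : A →+* B)).IsMaximal := by
    intro p hp
    obtain ⟨q, hq, hpq⟩ := p.asIdeal.exists_le_maximal p.isPrime.ne_top
    have hm := hq.comap_algHom φ₂
    have hqJ : ⟨q, hq.isPrime⟩ ∈ zeroLocus (J : Set B) :=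
      (mem_zeroLocus _ _).mpr (((mem_zeroLocus _ _).mp hp).trans hpq)
    obtain ⟨g, hg, n, -, -, hpow⟩ := hcontr _ hm _ hqJ
    convert hm using 1
    exact le_antisymm (Ideal.comap_mono hpq)
      (Ideal.le_comap_of_pow_map_le_pow_succ_map_away hpq (hfix p hp) le_rfl hg hpow)
  refine finite_zeroLocus_of_forall_isMaximal J fun p hp => ?_
  rw [← isClosed_singleton_iff_isMaximal]
  refine isClosed_singleton_of_finite_closure ((hqf (comap (φ₂ : A →+* B) p)).subset ?_)
  exact closure_minimal (Set.singleton_subset_iff.mpr rfl)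
    (((isClosed_singleton_iff_isMaximal _).mpr (hcomap p hp)).preimage (continuous_comap _))

/-- An affine correspondence `φ₁, φ₂ : A → B` between finitely generated
`k`-algebras which is quasi-finite (via `φ₂`) and contracting near every closed point of
`Spec A` in a neighborhood of its fixed points has finite fixed-point locus
`Fix = V(J)`, where `J` is generated by `{φ₁ a - φ₂ a}`. -/
theorem stmt11 {k A B : Type*} [Field k] [CommRing A] [CommRing B]
    [Algebra k A] [Algebra k B]
    (hA : Algebra.FiniteType k A) (hB : Algebra.FiniteType k B)
    (φ₁ φ₂ : A →ₐ[k] B)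
    (J : Ideal B) (hJ : J = Ideal.span {b : B | ∃ a : A, b = φ₁ a - φ₂ a})
    (hqf : ∀ p : PrimeSpectrum A,
      (PrimeSpectrum.comap (φ₂ : A →+* B) ⁻¹' {p}).Finite)
    (hcontr : ∀ m : Ideal A, m.IsMaximal →
      ∀ p ∈ PrimeSpectrum.zeroLocus (J : Set B),
      ∃ g : B, g ∉ p.asIdeal ∧ ∃ n : ℕ, 1 ≤ n ∧
        Ideal.map ((algebraMap B (Localization.Away g)).comp (φ₁ : A →+* B)) m ≤
          Ideal.map ((algebraMap B (Localization.Away g)).comp (φ₂ : A →+* B)) m ∧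
        (Ideal.map ((algebraMap B (Localization.Away g)).comp (φ₁ : A →+* B)) m) ^ n ≤
          (Ideal.map ((algebraMap B (Localization.Away g)).comp (φ₂ : A →+* B)) m) ^ (n + 1)) :
    (PrimeSpectrum.zeroLocus (J : Set B)).Finite :=
  stmt11_general hB φ₁ φ₂ J hJ hqf hcontr
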